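/- arXiv:2105.04664 — 4 statements merged into one kernel-verified Lean document; each statement's English description precedes it below -/
import Mathlib

section
/- Let a < b < c < d and α > 0. Suppose u is a C¹ solution of u_t + α u_x = 0 on [a,c]×[0,T] with u(a,t) = 0, and v is a C¹ solution of v_t + α v_x = 0 on [b,d]×[0,T] with v(b,t) = u(b,t) for all t. Then ∫_b^d v(x,T)² dx + ∫_a^b u(x,T)² dx ≤ ∫_b^d v(x,0)² dx + ∫_a^b u(x,0)² dx. -/
/-!
The sum of the two energies `∫ v²` over `(b, d)` and `∫ u²` over `(a, b)` is nonincreasing in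
time. For a solution `w` of `w_t + α w_x = 0`, differentiating under the integral and using the
equation gives `d/dt ∫_p^q w² = -α (w(q)² - w(p)²)`: energy only crosses the endpoints. Summing
the two pieces, the flux of `v` through `b` cancels the flux of `u` through `b` because of the
coupling `v(b, t) = u(b, t)`, nothing enters through `a` since `u(a, t) = 0`, and what remains is
the outflow `-α v(d, t)² ≤ 0`.
-/

open Set Topology Function MeasureTheory intervalIntegral
open scoped Interval

section ParametricIntegral

variable {E : Type*} [NormedAddCommGroup E] [NormedSpace ℝ E] {p q t₀ : ℝ} {K : Set ℝ}

theorem continuousOn_intervalIntegral_of_continuousOn_uncurry {F : ℝ → ℝ → E}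
    (hK : IsCompact K) (hF : ContinuousOn (uncurry F) ([[p, q]] ×ˢ K)) :
    ContinuousOn (fun t => ∫ x in p..q, F x t) K := by
  intro t₀ ht₀
  obtain ⟨C, hC⟩ := (isCompact_uIcc.prod hK).exists_bound_of_continuousOn hF
  refine continuousWithinAt_of_dominated_interval (F := fun t x => F x t) (bound := fun _ => C)
    ?_ ?_ intervalIntegrable_const ?_
  · filter_upwards [self_mem_nhdsWithin] with t ht
    exact ((hF.uncurry_right t ht).mono uIoc_subset_uIcc).aestronglyMeasurable measurableSet_uIoc
  · filter_upwards [self_mem_nhdsWithin] with t ht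
    exact ae_of_all _ fun x hx => hC (x, t) ⟨uIoc_subset_uIcc hx, ht⟩
  · exact ae_of_all _ fun x hx => hF.uncurry_left x (uIoc_subset_uIcc hx) t₀ ht₀

theorem hasDerivAt_intervalIntegral_of_continuousOn_uncurry {F F' : ℝ → ℝ → E}
    (hK : IsCompact K) (ht₀ : K ∈ 𝓝 t₀)
    (hF : ContinuousOn (uncurry F) ([[p, q]] ×ˢ K))
    (hF' : ContinuousOn (uncurry F') ([[p, q]] ×ˢ K))
    (hderiv : ∀ x ∈ [[p, q]], ∀ t ∈ K, HasDerivAt (F x) (F' x t) t) :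
    HasDerivAt (fun t => ∫ x in p..q, F x t) (∫ x in p..q, F' x t₀) t₀ := by
  have ht₀K : t₀ ∈ K := mem_of_mem_nhds ht₀
  obtain ⟨C, hC⟩ := (isCompact_uIcc.prod hK).exists_bound_of_continuousOn hF'
  refine (hasDerivAt_integral_of_dominated_loc_of_deriv_le (F := fun t x => F x t)
    (F' := fun t x => F' x t) (bound := fun _ => C) ht₀ ?_ ?_ ?_ ?_ intervalIntegrable_const
    ?_).2
  · filter_upwards [ht₀] with t ht
    exact ((hF.uncurry_right t ht).mono uIoc_subset_uIcc).aestronglyMeasurable measurableSet_uIoc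
  · exact (hF.uncurry_right t₀ ht₀K).intervalIntegrable
  · exact ((hF'.uncurry_right t₀ ht₀K).mono uIoc_subset_uIcc).aestronglyMeasurable
      measurableSet_uIoc
  · exact ae_of_all _ fun x hx t ht => hC (x, t) ⟨uIoc_subset_uIcc hx, ht⟩
  · exact ae_of_all _ fun x hx t ht => hderiv x (uIoc_subset_uIcc hx) t ht

end ParametricIntegral

theorem continuousOn_integral_sq {p q : ℝ} {K : Set ℝ} {w : ℝ → ℝ → ℝ} (hK : IsCompact K)
    (hw : ContinuousOn (uncurry w) ([[p, q]] ×ˢ K)) :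
    ContinuousOn (fun t => ∫ x in p..q, w x t ^ 2) K :=
  continuousOn_intervalIntegral_of_continuousOn_uncurry (F := fun x t => w x t ^ 2) hK
    (by exact hw.pow 2)

theorem hasDerivAt_integral_sq_of_transport {α p q t₀ : ℝ} {K : Set ℝ} {w wt wx : ℝ → ℝ → ℝ}
    (hK : IsCompact K) (ht₀ : K ∈ 𝓝 t₀)
    (hwt : ∀ x ∈ [[p, q]], ∀ t ∈ K, HasDerivAt (fun τ => w x τ) (wt x t) t)
    (hwx : ∀ x ∈ [[p, q]], ∀ t ∈ K, HasDerivAt (fun ξ => w ξ t) (wx x t) x)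
    (hw : ContinuousOn (uncurry w) ([[p, q]] ×ˢ K))
    (hwt' : ContinuousOn (uncurry wt) ([[p, q]] ×ˢ K))
    (hwx' : ContinuousOn (uncurry wx) ([[p, q]] ×ˢ K))
    (hpde : ∀ x ∈ [[p, q]], ∀ t ∈ K, wt x t + α * wx x t = 0) :
    HasDerivAt (fun t => ∫ x in p..q, w x t ^ 2) (-α * (w q t₀ ^ 2 - w p t₀ ^ 2)) t₀ := by
  have ht₀K : t₀ ∈ K := mem_of_mem_nhds ht₀
  have hflux : ∫ x in p..q, 2 * w x t₀ * wx x t₀ = w q t₀ ^ 2 - w p t₀ ^ 2 := by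
    refine integral_eq_sub_of_hasDerivAt (f := fun x => w x t₀ ^ 2) (fun x hx => ?_) ?_
    · simpa [mul_comm, mul_left_comm] using (hwx x hx t₀ ht₀K).fun_pow 2
    · have := hw.uncurry_right t₀ ht₀K
      have := hwx'.uncurry_right t₀ ht₀K
      exact ContinuousOn.intervalIntegrable (by fun_prop)
  have hdt := hasDerivAt_intervalIntegral_of_continuousOn_uncurry (p := p) (q := q)
    (F := fun x t => w x t ^ 2) (F' := fun x t => 2 * w x t * wt x t) hK ht₀
    (by fun_prop) (by fun_prop)
    fun x hx t ht => by simpa [mul_comm, mul_left_comm] using (hwt x hx t ht).fun_pow 2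
  refine hdt.congr_deriv ?_
  rw [← hflux, ← intervalIntegral.integral_const_mul]
  refine integral_congr fun x hx => ?_
  linear_combination 2 * w x t₀ * hpde x hx t₀ ht₀K

theorem stmt2 (a b c d α T : ℝ) (hab : a < b) (hbc : b < c) (hcd : c < d)
    (hα : 0 < α) (hT : 0 ≤ T)
    (u ut ux v vt vx : ℝ → ℝ → ℝ)
    (hut : ∀ x ∈ Set.Icc a c, ∀ t ∈ Set.Icc 0 T, HasDerivAt (fun τ => u x τ) (ut x t) t)
    (hux : ∀ x ∈ Set.Icc a c, ∀ t ∈ Set.Icc 0 T, HasDerivAt (fun ξ => u ξ t) (ux x t) x)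
    (hvt : ∀ x ∈ Set.Icc b d, ∀ t ∈ Set.Icc 0 T, HasDerivAt (fun τ => v x τ) (vt x t) t)
    (hvx : ∀ x ∈ Set.Icc b d, ∀ t ∈ Set.Icc 0 T, HasDerivAt (fun ξ => v ξ t) (vx x t) x)
    (hcontu : ContinuousOn (fun p : ℝ × ℝ => u p.1 p.2) (Set.Icc a c ×ˢ Set.Icc 0 T))
    (hcontut : ContinuousOn (fun p : ℝ × ℝ => ut p.1 p.2) (Set.Icc a c ×ˢ Set.Icc 0 T))
    (hcontux : ContinuousOn (fun p : ℝ × ℝ => ux p.1 p.2) (Set.Icc a c ×ˢ Set.Icc 0 T))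
    (hcontv : ContinuousOn (fun p : ℝ × ℝ => v p.1 p.2) (Set.Icc b d ×ˢ Set.Icc 0 T))
    (hcontvt : ContinuousOn (fun p : ℝ × ℝ => vt p.1 p.2) (Set.Icc b d ×ˢ Set.Icc 0 T))
    (hcontvx : ContinuousOn (fun p : ℝ × ℝ => vx p.1 p.2) (Set.Icc b d ×ˢ Set.Icc 0 T))
    (hpdeu : ∀ x ∈ Set.Icc a c, ∀ t ∈ Set.Icc 0 T, ut x t + α * ux x t = 0)
    (hpdev : ∀ x ∈ Set.Icc b d, ∀ t ∈ Set.Icc 0 T, vt x t + α * vx x t = 0)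
    (hbcu : ∀ t ∈ Set.Icc 0 T, u a t = 0)
    (hcouple : ∀ t ∈ Set.Icc 0 T, v b t = u b t) :
    (∫ x in b..d, (v x T)^2) + (∫ x in a..b, (u x T)^2)
      ≤ (∫ x in b..d, (v x 0)^2) + (∫ x in a..b, (u x 0)^2) := by
  rw [← uIcc_of_le (hbc.trans hcd).le] at hvt hvx hcontv hcontvt hcontvx hpdev
  have habc : [[a, b]] ⊆ Icc a c := uIcc_subset_Icc ⟨le_rfl, (hab.trans hbc).le⟩ ⟨hab.le, hbc.le⟩
  have habT : [[a, b]] ×ˢ Icc 0 T ⊆ Icc a c ×ˢ Icc 0 T := prod_mono habc subset_rfl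
  have hcont : ContinuousOn (fun t => (∫ x in b..d, v x t ^ 2) + ∫ x in a..b, u x t ^ 2)
      (Icc 0 T) :=
    (continuousOn_integral_sq isCompact_Icc hcontv).add
      (continuousOn_integral_sq isCompact_Icc (hcontu.mono habT))
  have hderiv : ∀ t ∈ interior (Icc 0 T), HasDerivAt
      (fun t => (∫ x in b..d, v x t ^ 2) + ∫ x in a..b, u x t ^ 2)
      (-α * (v d t ^ 2 - v b t ^ 2) + -α * (u b t ^ 2 - u a t ^ 2)) t := fun t ht =>
    (hasDerivAt_integral_sq_of_transport isCompact_Icc (mem_interior_iff_mem_nhds.1 ht)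
      hvt hvx hcontv hcontvt hcontvx hpdev).add
    (hasDerivAt_integral_sq_of_transport isCompact_Icc (mem_interior_iff_mem_nhds.1 ht)
      (fun x hx => hut x (habc hx)) (fun x hx => hux x (habc hx)) (hcontu.mono habT)
      (hcontut.mono habT) (hcontux.mono habT) fun x hx => hpdeu x (habc hx))
  have hanti := antitoneOn_of_hasDerivWithinAt_nonpos (convex_Icc 0 T) hcont
    (fun t ht => (hderiv t ht).hasDerivWithinAt) fun t ht => by
      have ht' := interior_subset ht
      rw [hcouple t ht', hbcu t ht']
      nlinarith [sq_nonneg (v d t)]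
  exact hanti (left_mem_Icc.2 hT) (right_mem_Icc.2 hT) hT
end

section
/- Let a < b < c < d and α > 0, and let ω₀ : [a,d] → ℝ be C¹ with ω₀(a)=0. Suppose ω solves ω_t + α ω_x = 0 on [a,d] with ω(a,t)=0 and ω(·,0)=ω₀; u solves the same PDE on [a,c] with u(a,t)=0, u(·,0)=ω₀; and v solves it on [b,d] with v(b,t)=u(b,t), v(·,0)=ω₀. Then u(x,t) = ω(x,t) for all x ∈ [a,c] and v(x,t) = ω(x,t) for all x ∈ [b,d], for every t ∈ [0,T]. -/
/-!
A classical solution of `w_t + α w_x = 0` is constant along each characteristic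
`s ↦ (x₀ + α s, s)`; the chain rule behind this only needs the spatial derivative to be jointly
continuous, the time derivative may merely exist. For `α > 0` the characteristic through `(x, t)`
runs back either to the initial line or to the inflow boundary `x = p`, so a solution with zero
initial and inflow data vanishes. This applies first to `u - ω` on `[a, c]`, and then to `v - ω`
on `[b, d]`, whose inflow value `v b - ω b = u b - ω b` vanishes by the first step.
-/

open Set Filter Topology Asymptotics

theorem isLittleO_sub_sub_of_continuousWithinAt_partialDeriv {w wx : ℝ → ℝ → ℝ}
    {I J K : Set ℝ} (hI : Convex ℝ I) {γ : ℝ → ℝ} {s : ℝ}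
    (hγ : ContinuousWithinAt γ K s) (hγK : MapsTo γ K I) (hKJ : K ⊆ J) (hs : s ∈ K)
    (hwx : ∀ x ∈ I, ∀ t ∈ J, HasDerivWithinAt (w · t) (wx x t) I x)
    (hcont : ContinuousWithinAt (fun p : ℝ × ℝ => wx p.1 p.2) (I ×ˢ J) (γ s, s)) :
    (fun τ => w (γ τ) τ - w (γ s) τ - (γ τ - γ s) * wx (γ s) s) =o[𝓝[K] s]
      fun τ => γ τ - γ s := by
  rw [isLittleO_iff]
  intro ε hε
  obtain ⟨δ, hδ, hball⟩ := Metric.continuousWithinAt_iff.1 hcont ε hε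
  have hnear : ∀ᶠ τ in 𝓝[K] s, τ ∈ K ∧ dist τ s < δ ∧ dist (γ τ) (γ s) < δ :=
    eventually_mem_nhdsWithin.and <| Eventually.and
      (nhdsWithin_le_nhds (Metric.ball_mem_nhds s hδ)) (Metric.tendsto_nhds.1 hγ.tendsto δ hδ)
  filter_upwards [hnear] with τ ⟨hτK, hτs, hγτ⟩
  have hτJ : τ ∈ J := hKJ hτK
  have hmvt := (hI.inter (convex_ball (γ s) δ)).norm_image_sub_le_of_norm_hasDerivWithin_le
    (f := fun x => w x τ - x * wx (γ s) s) (f' := fun x => wx x τ - wx (γ s) s) (C := ε)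
    (fun x hx => by
      simpa only [id, one_mul] using ((hwx x hx.1 τ hτJ).mono inter_subset_left).fun_sub
        ((hasDerivWithinAt_id x _).mul_const (wx (γ s) s)))
    (fun x hx => (hball (x := (x, τ)) ⟨hx.1, hτJ⟩
      (max_lt (Metric.mem_ball.1 hx.2) hτs)).le)
    ⟨hγK hs, Metric.mem_ball_self hδ⟩ ⟨hγK hτK, hγτ⟩
  calc ‖w (γ τ) τ - w (γ s) τ - (γ τ - γ s) * wx (γ s) s‖
      = ‖w (γ τ) τ - γ τ * wx (γ s) s - (w (γ s) τ - γ s * wx (γ s) s)‖ := by ring_nf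
    _ ≤ ε * ‖γ τ - γ s‖ := hmvt

theorem HasDerivWithinAt.comp_of_continuousWithinAt_partialDeriv {w wx : ℝ → ℝ → ℝ}
    {I J K : Set ℝ} (hI : Convex ℝ I) {γ : ℝ → ℝ} {γ' wt s : ℝ}
    (hγ : HasDerivWithinAt γ γ' K s) (hγK : MapsTo γ K I) (hKJ : K ⊆ J) (hs : s ∈ K)
    (hwx : ∀ x ∈ I, ∀ t ∈ J, HasDerivWithinAt (w · t) (wx x t) I x)
    (hcont : ContinuousWithinAt (fun p : ℝ × ℝ => wx p.1 p.2) (I ×ˢ J) (γ s, s))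
    (hwt : HasDerivWithinAt (w (γ s)) wt K s) :
    HasDerivWithinAt (fun τ => w (γ τ) τ) (wt + γ' * wx (γ s) s) K s := by
  have hspace := isLittleO_sub_sub_of_continuousWithinAt_partialDeriv hI
    hγ.continuousWithinAt hγK hKJ hs hwx hcont
  rw [hasDerivWithinAt_iff_isLittleO]
  refine (((hspace.trans_isBigO hγ.hasFDerivWithinAt.isBigO_sub).add hwt.isLittleO).add
    (hγ.isLittleO.const_mul_left (wx (γ s) s))).congr_left fun τ => ?_
  simp only [smul_eq_mul]
  ring

structure IsTransportSolution (α T : ℝ) (I : Set ℝ) (w wt wx : ℝ → ℝ → ℝ) : Prop where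
  hasDerivAt_time : ∀ x ∈ I, ∀ t ∈ Icc 0 T, HasDerivAt (fun τ => w x τ) (wt x t) t
  hasDerivAt_space : ∀ x ∈ I, ∀ t ∈ Icc 0 T, HasDerivAt (fun ξ => w ξ t) (wx x t) x
  continuousOn_space : ContinuousOn (fun p : ℝ × ℝ => wx p.1 p.2) (I ×ˢ Icc 0 T)
  transport : ∀ x ∈ I, ∀ t ∈ Icc 0 T, wt x t + α * wx x t = 0

namespace IsTransportSolution

variable {α T p q : ℝ} {I I' : Set ℝ} {u ut ux w wt wx : ℝ → ℝ → ℝ}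

theorem mono (h : IsTransportSolution α T I' w wt wx) (hI : I ⊆ I') :
    IsTransportSolution α T I w wt wx where
  hasDerivAt_time x hx := h.hasDerivAt_time x (hI hx)
  hasDerivAt_space x hx := h.hasDerivAt_space x (hI hx)
  continuousOn_space := h.continuousOn_space.mono (prod_mono hI subset_rfl)
  transport x hx := h.transport x (hI hx)

theorem sub (hu : IsTransportSolution α T I u ut ux) (hw : IsTransportSolution α T I w wt wx) :
    IsTransportSolution α T I (fun x t => u x t - w x t) (fun x t => ut x t - wt x t)
      (fun x t => ux x t - wx x t) where
  hasDerivAt_time x hx t ht := (hu.hasDerivAt_time x hx t ht).sub (hw.hasDerivAt_time x hx t ht)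
  hasDerivAt_space x hx t ht :=
    (hu.hasDerivAt_space x hx t ht).sub (hw.hasDerivAt_space x hx t ht)
  continuousOn_space := hu.continuousOn_space.sub hw.continuousOn_space
  transport x hx t ht := by
    linear_combination hu.transport x hx t ht - hw.transport x hx t ht

theorem eq_of_mapsTo_characteristic (h : IsTransportSolution α T (Icc p q) w wt wx)
    {x₀ s₀ t : ℝ} (hs₀ : 0 ≤ s₀) (hs₀t : s₀ ≤ t) (htT : t ≤ T)
    (hline : MapsTo (fun s => x₀ + α * s) (Icc s₀ t) (Icc p q)) :
    w (x₀ + α * t) t = w (x₀ + α * s₀) s₀ := by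
  have hderiv : ∀ s ∈ Icc s₀ t,
      HasDerivWithinAt (fun s => w (x₀ + α * s) s) 0 (Icc s₀ t) s := by
    intro s hs
    have hsT : s ∈ Icc 0 T := ⟨hs₀.trans hs.1, hs.2.trans htT⟩
    have hγ : HasDerivWithinAt (fun s => x₀ + α * s) α (Icc s₀ t) s := by
      simpa using ((hasDerivWithinAt_id s _).const_mul α).const_add x₀
    have hchain := HasDerivWithinAt.comp_of_continuousWithinAt_partialDeriv (convex_Icc p q)
      hγ hline (Icc_subset_Icc hs₀ htT) hs
      (fun x hx t ht => (h.hasDerivAt_space x hx t ht).hasDerivWithinAt)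
      (h.continuousOn_space _ ⟨hline hs, hsT⟩)
      (h.hasDerivAt_time _ (hline hs) s hsT).hasDerivWithinAt
    rwa [h.transport _ (hline hs) s hsT] at hchain
  exact constant_of_has_deriv_right_zero (fun s hs => (hderiv s hs).continuousWithinAt)
    (fun s hs => (hderiv s (Ico_subset_Icc_self hs)).mono_of_mem_nhdsWithin
      (Icc_mem_nhdsGE_of_mem hs)) t ⟨hs₀t, le_rfl⟩

theorem eq_zero (h : IsTransportSolution α T (Icc p q) w wt wx) (hα : 0 < α)
    (hbc : ∀ t ∈ Icc 0 T, w p t = 0) (hic : ∀ x ∈ Icc p q, w x 0 = 0) :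
    ∀ t ∈ Icc 0 T, ∀ x ∈ Icc p q, w x t = 0 := by
  intro t ht x hx
  -- the characteristic through `(x, t)` enters the domain at time `s₀`
  obtain ⟨s₀, hs₀⟩ : ∃ s₀, s₀ = max 0 (t - (x - p) / α) := ⟨_, rfl⟩
  have hs₀t : s₀ ≤ t :=
    hs₀ ▸ max_le ht.1 (sub_le_self _ (div_nonneg (sub_nonneg.2 hx.1) hα.le))
  have hline : MapsTo (fun s => x - α * t + α * s) (Icc s₀ t) (Icc p q) := by
    intro s hs
    have hlow : α * t - (x - p) ≤ α * s := by
      calc α * t - (x - p) = α * (t - (x - p) / α) := by field_simp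
        _ ≤ α * s := mul_le_mul_of_nonneg_left ((le_max_right _ _).trans (hs₀ ▸ hs.1)) hα.le
    have hup : α * s ≤ α * t := mul_le_mul_of_nonneg_left hs.2 hα.le
    constructor <;> linarith [hx.2]
  have hs₀T : s₀ ∈ Icc 0 T := ⟨hs₀ ▸ le_max_left _ _, hs₀t.trans ht.2⟩
  have hconst := h.eq_of_mapsTo_characteristic hs₀T.1 hs₀t ht.2 hline
  rw [sub_add_cancel] at hconst
  rw [hconst]
  rcases max_cases 0 (t - (x - p) / α) with ⟨h0, -⟩ | ⟨h1, -⟩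
  · obtain rfl : s₀ = 0 := hs₀.trans h0
    simpa using hic _ (hline ⟨le_rfl, hs₀t⟩)
  · have hfoot : x - α * t + α * s₀ = p := by rw [hs₀, h1]; field_simp; ring
    rw [hfoot]
    exact hbc s₀ hs₀T

theorem eqOn (hu : IsTransportSolution α T (Icc p q) u ut ux)
    (hw : IsTransportSolution α T (Icc p q) w wt wx) (hα : 0 < α)
    (hbc : ∀ t ∈ Icc 0 T, u p t = w p t) (hic : ∀ x ∈ Icc p q, u x 0 = w x 0) :
    ∀ t ∈ Icc 0 T, ∀ x ∈ Icc p q, u x t = w x t := fun t ht x hx =>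
  sub_eq_zero.1 <| (hu.sub hw).eq_zero hα (fun t ht => sub_eq_zero.2 (hbc t ht))
    (fun x hx => sub_eq_zero.2 (hic x hx)) t ht x hx

end IsTransportSolution

theorem stmt3_general (a b c d α T : ℝ) (hab : a < b) (hbc : b < c) (hcd : c < d)
    (hα : 0 < α)
    (ω₀ : ℝ → ℝ)
    (ω ωt ωx u ut ux v vt vx : ℝ → ℝ → ℝ)
    (hωt : ∀ x ∈ Set.Icc a d, ∀ t ∈ Set.Icc 0 T, HasDerivAt (fun τ => ω x τ) (ωt x t) t)
    (hωx : ∀ x ∈ Set.Icc a d, ∀ t ∈ Set.Icc 0 T, HasDerivAt (fun ξ => ω ξ t) (ωx x t) x)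
    (hut : ∀ x ∈ Set.Icc a c, ∀ t ∈ Set.Icc 0 T, HasDerivAt (fun τ => u x τ) (ut x t) t)
    (hux : ∀ x ∈ Set.Icc a c, ∀ t ∈ Set.Icc 0 T, HasDerivAt (fun ξ => u ξ t) (ux x t) x)
    (hvt : ∀ x ∈ Set.Icc b d, ∀ t ∈ Set.Icc 0 T, HasDerivAt (fun τ => v x τ) (vt x t) t)
    (hvx : ∀ x ∈ Set.Icc b d, ∀ t ∈ Set.Icc 0 T, HasDerivAt (fun ξ => v ξ t) (vx x t) x)
    (hcontωx : ContinuousOn (fun p : ℝ × ℝ => ωx p.1 p.2) (Set.Icc a d ×ˢ Set.Icc 0 T))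
    (hcontux : ContinuousOn (fun p : ℝ × ℝ => ux p.1 p.2) (Set.Icc a c ×ˢ Set.Icc 0 T))
    (hcontvx : ContinuousOn (fun p : ℝ × ℝ => vx p.1 p.2) (Set.Icc b d ×ˢ Set.Icc 0 T))
    (hpdeω : ∀ x ∈ Set.Icc a d, ∀ t ∈ Set.Icc 0 T, ωt x t + α * ωx x t = 0)
    (hpdeu : ∀ x ∈ Set.Icc a c, ∀ t ∈ Set.Icc 0 T, ut x t + α * ux x t = 0)
    (hpdev : ∀ x ∈ Set.Icc b d, ∀ t ∈ Set.Icc 0 T, vt x t + α * vx x t = 0)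
    (hbcω : ∀ t ∈ Set.Icc 0 T, ω a t = 0)
    (hbcu : ∀ t ∈ Set.Icc 0 T, u a t = 0)
    (hcouple : ∀ t ∈ Set.Icc 0 T, v b t = u b t)
    (hicω : ∀ x ∈ Set.Icc a d, ω x 0 = ω₀ x)
    (hicu : ∀ x ∈ Set.Icc a c, u x 0 = ω₀ x)
    (hicv : ∀ x ∈ Set.Icc b d, v x 0 = ω₀ x) :
    (∀ t ∈ Set.Icc 0 T, ∀ x ∈ Set.Icc a c, u x t = ω x t)
    ∧ (∀ t ∈ Set.Icc 0 T, ∀ x ∈ Set.Icc b d, v x t = ω x t) := by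
  have hω : IsTransportSolution α T (Icc a d) ω ωt ωx := ⟨hωt, hωx, hcontωx, hpdeω⟩
  have hu : IsTransportSolution α T (Icc a c) u ut ux := ⟨hut, hux, hcontux, hpdeu⟩
  have hv : IsTransportSolution α T (Icc b d) v vt vx := ⟨hvt, hvx, hcontvx, hpdev⟩
  have hac : Icc a c ⊆ Icc a d := Icc_subset_Icc_right hcd.le
  have hbd : Icc b d ⊆ Icc a d := Icc_subset_Icc_left hab.le
  have hu_eq := hu.eqOn (hω.mono hac) hα (fun t ht => by rw [hbcu t ht, hbcω t ht])
    (fun x hx => by rw [hicu x hx, hicω x (hac hx)])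
  refine ⟨hu_eq, hv.eqOn (hω.mono hbd) hα (fun t ht => ?_) (fun x hx => ?_)⟩
  · rw [hcouple t ht, hu_eq t ht b ⟨hab.le, hbc.le⟩]
  · rw [hicv x hx, hicω x (hbd hx)]

theorem stmt3 (a b c d α T : ℝ) (hab : a < b) (hbc : b < c) (hcd : c < d)
    (hα : 0 < α) (hT : 0 ≤ T)
    (ω₀ : ℝ → ℝ) (hω₀ : ContDiffOn ℝ 1 ω₀ (Set.Icc a d)) (hω₀a : ω₀ a = 0)
    (ω ωt ωx u ut ux v vt vx : ℝ → ℝ → ℝ)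
    (hωt : ∀ x ∈ Set.Icc a d, ∀ t ∈ Set.Icc 0 T, HasDerivAt (fun τ => ω x τ) (ωt x t) t)
    (hωx : ∀ x ∈ Set.Icc a d, ∀ t ∈ Set.Icc 0 T, HasDerivAt (fun ξ => ω ξ t) (ωx x t) x)
    (hut : ∀ x ∈ Set.Icc a c, ∀ t ∈ Set.Icc 0 T, HasDerivAt (fun τ => u x τ) (ut x t) t)
    (hux : ∀ x ∈ Set.Icc a c, ∀ t ∈ Set.Icc 0 T, HasDerivAt (fun ξ => u ξ t) (ux x t) x)
    (hvt : ∀ x ∈ Set.Icc b d, ∀ t ∈ Set.Icc 0 T, HasDerivAt (fun τ => v x τ) (vt x t) t)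
    (hvx : ∀ x ∈ Set.Icc b d, ∀ t ∈ Set.Icc 0 T, HasDerivAt (fun ξ => v ξ t) (vx x t) x)
    (hcontω : ContinuousOn (fun p : ℝ × ℝ => ω p.1 p.2) (Set.Icc a d ×ˢ Set.Icc 0 T))
    (hcontωt : ContinuousOn (fun p : ℝ × ℝ => ωt p.1 p.2) (Set.Icc a d ×ˢ Set.Icc 0 T))
    (hcontωx : ContinuousOn (fun p : ℝ × ℝ => ωx p.1 p.2) (Set.Icc a d ×ˢ Set.Icc 0 T))
    (hcontu : ContinuousOn (fun p : ℝ × ℝ => u p.1 p.2) (Set.Icc a c ×ˢ Set.Icc 0 T))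
    (hcontut : ContinuousOn (fun p : ℝ × ℝ => ut p.1 p.2) (Set.Icc a c ×ˢ Set.Icc 0 T))
    (hcontux : ContinuousOn (fun p : ℝ × ℝ => ux p.1 p.2) (Set.Icc a c ×ˢ Set.Icc 0 T))
    (hcontv : ContinuousOn (fun p : ℝ × ℝ => v p.1 p.2) (Set.Icc b d ×ˢ Set.Icc 0 T))
    (hcontvt : ContinuousOn (fun p : ℝ × ℝ => vt p.1 p.2) (Set.Icc b d ×ˢ Set.Icc 0 T))
    (hcontvx : ContinuousOn (fun p : ℝ × ℝ => vx p.1 p.2) (Set.Icc b d ×ˢ Set.Icc 0 T))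
    (hpdeω : ∀ x ∈ Set.Icc a d, ∀ t ∈ Set.Icc 0 T, ωt x t + α * ωx x t = 0)
    (hpdeu : ∀ x ∈ Set.Icc a c, ∀ t ∈ Set.Icc 0 T, ut x t + α * ux x t = 0)
    (hpdev : ∀ x ∈ Set.Icc b d, ∀ t ∈ Set.Icc 0 T, vt x t + α * vx x t = 0)
    (hbcω : ∀ t ∈ Set.Icc 0 T, ω a t = 0)
    (hbcu : ∀ t ∈ Set.Icc 0 T, u a t = 0)
    (hcouple : ∀ t ∈ Set.Icc 0 T, v b t = u b t)
    (hicω : ∀ x ∈ Set.Icc a d, ω x 0 = ω₀ x)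
    (hicu : ∀ x ∈ Set.Icc a c, u x 0 = ω₀ x)
    (hicv : ∀ x ∈ Set.Icc b d, v x 0 = ω₀ x) :
    (∀ t ∈ Set.Icc 0 T, ∀ x ∈ Set.Icc a c, u x t = ω x t)
    ∧ (∀ t ∈ Set.Icc 0 T, ∀ x ∈ Set.Icc b d, v x t = ω x t) :=
  stmt3_general a b c d α T hab hbc hcd hα ω₀ ω ωt ωx u ut ux v vt vx hωt hωx hut hux hvt hvx
    hcontωx hcontux hcontvx hpdeω hpdeu hpdev hbcω hbcu hcouple hicω hicu hicv
end

section
/- Let A, Σ_u, Σ_v, M be as above and R = ½[[I, I],[−I, I]]. Then RᵀMR = ¼[[4(Σ_u+Σ_v), 2βA + 2(Σ_u−Σ_v)], [2βA + 2(Σ_u−Σ_v), 0]]. Consequently, M ≥ 0 holds if and only if Σ_v − Σ_u = βA and Σ_u + Σ_v ≥ 0. -/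
/-! The change of variables `(u, v) ↦ (u - v, u + v)` is invertible, so `M` is positive
semidefinite iff the rotated matrix `[[4(Σu + Σv), 2T], [2T, 0]]` is, where `T = βA + Σu - Σv`.
In a positive semidefinite matrix with a zero diagonal block, the vectors supported on that block
are isotropic, hence in the kernel, which forces the off-diagonal block `T` to vanish. -/

open Matrix
open scoped ComplexOrder

namespace Matrix

section blocks

variable {m n 𝕜 : Type*} [Fintype m] [Fintype n] [RCLike 𝕜]

theorem posSemidef_fromBlocks_zero₂₂_iff {S : Matrix m m 𝕜} {T : Matrix m n 𝕜} :
    (fromBlocks S T Tᴴ 0).PosSemidef ↔ T = 0 ∧ S.PosSemidef := by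
  constructor
  · intro h
    refine ⟨ext_iff_mulVec.mpr fun w => ?_, h.submatrix Sum.inl⟩
    have hw := (h.dotProduct_mulVec_zero_iff (Sum.elim 0 w)).mp (by
      simp [fromBlocks_mulVec, Function.star_sumElim])
    simpa [fromBlocks_mulVec] using congrArg (· ∘ Sum.inl) hw
  · rintro ⟨rfl, hS⟩
    refine .of_dotProduct_mulVec_nonneg (hS.isHermitian.fromBlocks (by simp) (by simp)) fun x => ?_
    obtain ⟨y, z, rfl⟩ : ∃ y z, x = Sum.elim y z := ⟨_, _, (Sum.elim_comp_inl_inr x).symm⟩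
    simpa [fromBlocks_mulVec, Function.star_sumElim, sumElim_dotProduct_sumElim] using
      hS.dotProduct_mulVec_nonneg y

omit [Fintype n] in
theorem posSemidef_smul_iff {X : Matrix n n 𝕜} {c : ℝ} (hc : 0 < c) :
    (c • X).PosSemidef ↔ X.PosSemidef :=
  ⟨fun h => by simpa [smul_smul, hc.ne'] using h.smul (inv_nonneg.mpr hc.le), (·.smul hc.le)⟩

end blocks

section rotation

variable {m K : Type*} [Fintype m] [DecidableEq m] [Field K]

theorem transpose_rotation_mul_fromBlocks_mul_rotation (P B C D : Matrix m m K) :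
    ((1/2 : K) • fromBlocks (1 : Matrix m m K) 1 (-1) 1)ᵀ * fromBlocks P B C D *
        ((1/2 : K) • fromBlocks (1 : Matrix m m K) 1 (-1) 1) =
      (1/4 : K) • fromBlocks (P - B - C + D) (P + B - C - D) (P - B + C - D) (P + B + C + D) := by
  have h : (fromBlocks (1 : Matrix m m K) 1 (-1) 1)ᵀ * fromBlocks P B C D *
      fromBlocks 1 1 (-1) 1 =
      fromBlocks (P - B - C + D) (P + B - C - D) (P - B + C - D) (P + B + C + D) := by
    simp only [fromBlocks_transpose, fromBlocks_multiply, transpose_one, transpose_neg,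
      Matrix.one_mul, Matrix.mul_one, Matrix.neg_mul, Matrix.mul_neg]
    congr 1 <;> abel
  simp only [transpose_smul, Matrix.smul_mul, Matrix.mul_smul, smul_smul, h]
  rw [one_div_mul_one_div]
  norm_num

theorem isUnit_rotation [NeZero (2 : K)] :
    IsUnit ((1/2 : K) • (fromBlocks 1 1 (-1) 1 : Matrix (m ⊕ m) (m ⊕ m) K)) := by
  refine (isUnit_iff_isUnit_det _).mpr (isUnit_det_of_right_inverse (B := fromBlocks 1 (-1) 1 1) ?_)
  simp only [smul_mul, fromBlocks_multiply, Matrix.mul_one, Matrix.mul_neg, neg_neg]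
  rw [← fromBlocks_one, fromBlocks_smul]
  congr 1 <;> simp [← two_smul K, smul_smul, two_ne_zero]

end rotation

end Matrix

theorem stmt9 (n : ℕ) (β : ℝ) (A Su Sv : Matrix (Fin n) (Fin n) ℝ)
    (hA : A.IsSymm) (hSu : Su.IsSymm) (hSv : Sv.IsSymm) :
    let M := Matrix.fromBlocks (β • A + (2:ℝ) • Su) (-(Su + Sv)) (-(Su + Sv))
        (-(β • A) + (2:ℝ) • Sv)
    let R := (1/2 : ℝ) • Matrix.fromBlocks (1 : Matrix (Fin n) (Fin n) ℝ) 1 (-1) 1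
    Rᵀ * M * R = (1/4 : ℝ) • Matrix.fromBlocks
        ((4:ℝ) • (Su + Sv)) ((2*β) • A + (2:ℝ) • (Su - Sv))
        ((2*β) • A + (2:ℝ) • (Su - Sv)) 0
    ∧ (M.PosSemidef ↔ Sv - Su = β • A ∧ (Su + Sv).PosSemidef) := by
  intro M R
  set T := (2*β) • A + (2:ℝ) • (Su - Sv)
  have hrot : Rᵀ * M * R = (1/4 : ℝ) • fromBlocks ((4:ℝ) • (Su + Sv)) T T 0 := by
    rw [transpose_rotation_mul_fromBlocks_mul_rotation]
    congr 2 <;> module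
  have hT : Tᴴ = T := by
    simp [T, conjTranspose_eq_transpose_of_trivial, hA.eq, hSu.eq, hSv.eq]
  have hT0 : T = 0 ↔ Sv - Su = β • A := by
    rw [show T = (2:ℝ) • (β • A - (Sv - Su)) by module, smul_eq_zero, sub_eq_zero]
    simp [eq_comm]
  refine ⟨hrot, ?_⟩
  rw [← (isUnit_rotation (K := ℝ)).posSemidef_star_left_conjugate_iff (x := M),
    star_eq_conjTranspose, conjTranspose_eq_transpose_of_trivial, hrot,
    posSemidef_smul_iff (by norm_num)]
  nth_rw 2 [← hT]
  rw [posSemidef_fromBlocks_zero₂₂_iff, posSemidef_smul_iff (by norm_num), hT0]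
end

section
/- Let a < b < c < d, A real symmetric with nonzero eigenvalues, and suppose u on [a,c] and v on [b,d] are C¹ solutions of q_t + A q_x = 0 coupled by the characteristic conditions w_u⁻(c,t) = w_v⁻(c,t) and w_v⁺(b,t) = w_u⁺(b,t), with trivial incoming characteristic data w_u⁺(a,t)=0 and w_v⁻(d,t)=0 and common initial data ω₀. Then for every T, ∫_a^c |u(x,T)|² dx ≤ ∫_a^d |ω₀(x)|² dx and ∫_b^d |v(x,T)|² dx ≤ ∫_a^d |ω₀(x)|² dx. -/
/-!
Rotating by `Pᵀ` splits the system into scalar transport equations `w_t + λ w_x = 0` for the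
characteristic variables, and `|q|² = ∑ wᵢ²` because `P` is orthogonal. For each scalar equation,
integrating `∂ₜ(w²) = -λ ∂ₓ(w²)` over `[p, q] × [0, T]` balances the energy at time `T` plus the
outflow against the initial energy plus the inflow. On the grid whose inflow boundary carries zero
data the energy cannot grow. The other grid's inflow through the interface is the first grid's
outflow at that point, and the balance on the part of the first grid beyond the interface bounds
this outflow by the initial energy there; together with the initial energy of the second grid
this is at most the initial energy on `[a, d]`.
-/

open Set intervalIntegral Matrix MeasureTheory Function

theorem intervalIntegral_integral_swap_of_continuousOn {E : Type*} [NormedAddCommGroup E]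
    [NormedSpace ℝ E] [CompleteSpace E] {a b c d : ℝ} (hab : a ≤ b) (hcd : c ≤ d)
    {g : ℝ → ℝ → E} (hg : ContinuousOn (uncurry g) (Icc a b ×ˢ Icc c d)) :
    ∫ x in a..b, ∫ y in c..d, g x y = ∫ y in c..d, ∫ x in a..b, g x y := by
  have hint : Integrable (uncurry g)
      ((volume.restrict (Ioc a b)).prod (volume.restrict (Ioc c d))) := by
    rw [Measure.prod_restrict, ← Measure.volume_eq_prod]
    exact (hg.integrableOn_compact (isCompact_Icc.prod isCompact_Icc)).mono_set
      (prod_mono Ioc_subset_Icc_self Ioc_subset_Icc_self)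
  simp_rw [integral_of_le hab, integral_of_le hcd]
  exact integral_integral_swap hint

theorem integral_two_mul_mul_deriv_eq_sq_sub {f f' : ℝ → ℝ} {a b : ℝ}
    (hf : ∀ x ∈ uIcc a b, HasDerivAt f (f' x) x) (hf' : ContinuousOn f' (uIcc a b)) :
    ∫ x in a..b, 2 * f x * f' x = f b ^ 2 - f a ^ 2 := by
  have hcont : ContinuousOn f (uIcc a b) := fun x hx =>
    (hf x hx).continuousAt.continuousWithinAt
  refine integral_eq_sub_of_hasDerivAt (f := fun x => f x ^ 2) (fun x hx => ?_)
    (ContinuousOn.intervalIntegrable (by fun_prop))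
  exact ((hf x hx).fun_pow 2).congr_deriv (by ring)

theorem transport_energy_identity {lam p q t₀ t₁ : ℝ} {f ft fx : ℝ → ℝ → ℝ}
    (hpq : p ≤ q) (ht : t₀ ≤ t₁)
    (hft : ∀ x ∈ Icc p q, ∀ t ∈ Icc t₀ t₁, HasDerivAt (f x ·) (ft x t) t)
    (hfx : ∀ x ∈ Icc p q, ∀ t ∈ Icc t₀ t₁, HasDerivAt (f · t) (fx x t) x)
    (hf_cont : ContinuousOn (uncurry f) (Icc p q ×ˢ Icc t₀ t₁))
    (hft_cont : ContinuousOn (uncurry ft) (Icc p q ×ˢ Icc t₀ t₁))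
    (hfx_cont : ContinuousOn (uncurry fx) (Icc p q ×ˢ Icc t₀ t₁))
    (hpde : ∀ x ∈ Icc p q, ∀ t ∈ Icc t₀ t₁, ft x t + lam * fx x t = 0) :
    (∫ x in p..q, f x t₁ ^ 2) + lam * ∫ t in t₀..t₁, f q t ^ 2
      = (∫ x in p..q, f x t₀ ^ 2) + lam * ∫ t in t₀..t₁, f p t ^ 2 := by
  have htime : ∀ x ∈ Icc p q, ∫ t in t₀..t₁, 2 * f x t * ft x t = f x t₁ ^ 2 - f x t₀ ^ 2 :=
    fun x hx => integral_two_mul_mul_deriv_eq_sq_sub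
      (fun t ht' => hft x hx t (uIcc_of_le ht ▸ ht'))
      (uIcc_of_le ht ▸ hft_cont.uncurry_left x hx)
  have hspace : ∀ t ∈ Icc t₀ t₁, ∫ x in p..q, 2 * f x t * fx x t = f q t ^ 2 - f p t ^ 2 :=
    fun t ht' => integral_two_mul_mul_deriv_eq_sq_sub
      (fun x hx => hfx x (uIcc_of_le hpq ▸ hx) t ht')
      (uIcc_of_le hpq ▸ hfx_cont.uncurry_right t ht')
  have hswap := intervalIntegral_integral_swap_of_continuousOn hpq ht
    (g := fun x t => 2 * f x t * fx x t) (by exact (continuousOn_const.mul hf_cont).mul hfx_cont)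
  have hint_x : ∀ t ∈ Icc t₀ t₁, IntervalIntegrable (fun x => f x t ^ 2) volume p q :=
    fun t ht' => ((hf_cont.uncurry_right t ht').pow 2).intervalIntegrable_of_Icc hpq
  have hint_t : ∀ x ∈ Icc p q, IntervalIntegrable (fun t => f x t ^ 2) volume t₀ t₁ :=
    fun x hx => ((hf_cont.uncurry_left x hx).pow 2).intervalIntegrable_of_Icc ht
  suffices (∫ x in p..q, f x t₁ ^ 2) - (∫ x in p..q, f x t₀ ^ 2)
      = -lam * ((∫ t in t₀..t₁, f q t ^ 2) - ∫ t in t₀..t₁, f p t ^ 2) by linarith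
  calc (∫ x in p..q, f x t₁ ^ 2) - (∫ x in p..q, f x t₀ ^ 2)
      = ∫ x in p..q, ∫ t in t₀..t₁, 2 * f x t * ft x t := by
        rw [← integral_sub (hint_x t₁ (right_mem_Icc.2 ht)) (hint_x t₀ (left_mem_Icc.2 ht))]
        exact integral_congr fun x hx => (htime x (uIcc_of_le hpq ▸ hx)).symm
    _ = ∫ x in p..q, -lam * ∫ t in t₀..t₁, 2 * f x t * fx x t := by
        refine integral_congr fun x hx => ?_
        rw [← intervalIntegral.integral_const_mul]
        refine integral_congr fun t ht' => ?_
        have := hpde x (uIcc_of_le hpq ▸ hx) t (uIcc_of_le ht ▸ ht')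
        rw [show ft x t = -(lam * fx x t) by linarith]
        ring
    _ = -lam * ∫ t in t₀..t₁, (f q t ^ 2 - f p t ^ 2) := by
        rw [intervalIntegral.integral_const_mul, hswap]
        congr 1
        exact integral_congr fun t ht' => hspace t (uIcc_of_le ht ▸ ht')
    _ = -lam * ((∫ t in t₀..t₁, f q t ^ 2) - ∫ t in t₀..t₁, f p t ^ 2) := by
        rw [integral_sub (hint_t q (right_mem_Icc.2 hpq)) (hint_t p (left_mem_Icc.2 hpq))]

def HasEnergyBalance (lam : ℝ) (w : ℝ → ℝ → ℝ) (lo hi T : ℝ) : Prop :=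
  ∀ ⦃p q : ℝ⦄, lo ≤ p → p ≤ q → q ≤ hi →
    (∫ x in p..q, w x T ^ 2) + lam * ∫ t in (0:ℝ)..T, w q t ^ 2
      = (∫ x in p..q, w x 0 ^ 2) + lam * ∫ t in (0:ℝ)..T, w p t ^ 2

structure IsClassicalSolution {ι : Type*} [Fintype ι] (A : Matrix ι ι ℝ) (lo hi : ℝ)
    (u ut ux : ℝ → ℝ → ι → ℝ) : Prop where
  hasDerivAt_time : ∀ x ∈ Icc lo hi, ∀ t ∈ Ici (0:ℝ), HasDerivAt (u x ·) (ut x t) t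
  hasDerivAt_space : ∀ x ∈ Icc lo hi, ∀ t ∈ Ici (0:ℝ), HasDerivAt (u · t) (ux x t) x
  continuousOn : ContinuousOn (uncurry u) (Icc lo hi ×ˢ Ici 0)
  continuousOn_time : ContinuousOn (uncurry ut) (Icc lo hi ×ˢ Ici 0)
  continuousOn_space : ContinuousOn (uncurry ux) (Icc lo hi ×ˢ Ici 0)
  pde : ∀ x ∈ Icc lo hi, ∀ t ∈ Ici (0:ℝ), ut x t + A *ᵥ ux x t = 0

namespace IsClassicalSolution

variable {ι : Type*} [Fintype ι] {A : Matrix ι ι ℝ} {lo hi : ℝ} {u ut ux : ℝ → ℝ → ι → ℝ}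

theorem mulVec (hu : IsClassicalSolution A lo hi u ut ux) {M B : Matrix ι ι ℝ}
    (hMA : M * A = B * M) :
    IsClassicalSolution B lo hi (fun x t => M *ᵥ u x t) (fun x t => M *ᵥ ut x t)
      (fun x t => M *ᵥ ux x t) where
  hasDerivAt_time x hx t ht :=
    (mulVecLin M).toContinuousLinearMap.hasFDerivAt.comp_hasDerivAt t
      (hu.hasDerivAt_time x hx t ht)
  hasDerivAt_space x hx t ht :=
    (mulVecLin M).toContinuousLinearMap.hasFDerivAt.comp_hasDerivAt x
      (hu.hasDerivAt_space x hx t ht)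
  continuousOn :=
    (continuous_const.matrix_mulVec continuous_id).comp_continuousOn hu.continuousOn
  continuousOn_time :=
    (continuous_const.matrix_mulVec continuous_id).comp_continuousOn hu.continuousOn_time
  continuousOn_space :=
    (continuous_const.matrix_mulVec continuous_id).comp_continuousOn hu.continuousOn_space
  pde x hx t ht := by
    rw [mulVec_mulVec, ← hMA, ← mulVec_mulVec, ← mulVec_add, hu.pde x hx t ht, mulVec_zero]

theorem hasEnergyBalance [DecidableEq ι] {Λ : ι → ℝ}
    (hu : IsClassicalSolution (diagonal Λ) lo hi u ut ux) {T : ℝ} (hT : 0 ≤ T) (i : ι) :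
    HasEnergyBalance (Λ i) (fun x t => u x t i) lo hi T := by
  intro p q hp hpq hq
  have hsub : Icc p q ×ˢ Icc 0 T ⊆ Icc lo hi ×ˢ Ici 0 :=
    prod_mono (Icc_subset_Icc hp hq) Icc_subset_Ici_self
  have hmem : ∀ x ∈ Icc p q, x ∈ Icc lo hi := fun x hx => Icc_subset_Icc hp hq hx
  refine transport_energy_identity (ft := fun x t => ut x t i) (fx := fun x t => ux x t i)
    hpq hT
    (fun x hx t ht => hasDerivAt_pi.1 (hu.hasDerivAt_time x (hmem x hx) t ht.1) i)
    (fun x hx t ht => hasDerivAt_pi.1 (hu.hasDerivAt_space x (hmem x hx) t ht.1) i)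
    ((continuous_apply i).comp_continuousOn (hu.continuousOn.mono hsub))
    ((continuous_apply i).comp_continuousOn (hu.continuousOn_time.mono hsub))
    ((continuous_apply i).comp_continuousOn (hu.continuousOn_space.mono hsub))
    (fun x hx t ht => ?_)
  simpa [mulVec_diagonal] using congrFun (hu.pde x (hmem x hx) t ht.1) i

end IsClassicalSolution

theorem dotProduct_self_eq_sum_sq_transpose_mulVec {ι : Type*} [Fintype ι] [DecidableEq ι]
    {P : Matrix ι ι ℝ} (hP : Pᵀ * P = 1) (w : ι → ℝ) :
    w ⬝ᵥ w = ∑ i, (Pᵀ *ᵥ w) i ^ 2 := by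
  have hPP : P * Pᵀ = 1 := mul_eq_one_comm.mp hP
  have : (Pᵀ *ᵥ w) ⬝ᵥ (Pᵀ *ᵥ w) = w ⬝ᵥ w := by
    rw [dotProduct_mulVec, mulVec_transpose, vecMul_vecMul, hPP, vecMul_one]
  rw [← this]
  simp only [dotProduct, sq]

theorem integral_dotProduct_self_eq_sum_sq_transpose_mulVec {ι : Type*} [Fintype ι]
    [DecidableEq ι] {P : Matrix ι ι ℝ} (hP : Pᵀ * P = 1) {g : ℝ → ι → ℝ} {p q : ℝ}
    (hpq : p ≤ q) (hg : ContinuousOn g (Icc p q)) :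
    ∫ x in p..q, g x ⬝ᵥ g x = ∑ i, ∫ x in p..q, (Pᵀ *ᵥ g x) i ^ 2 := by
  simp_rw [dotProduct_self_eq_sum_sq_transpose_mulVec hP]
  exact integral_finsetSum fun i _ =>
    (by fun_prop : ContinuousOn _ _).intervalIntegrable_of_Icc hpq

theorem overset_energy_le {lam a b c d T : ℝ} {wu wv : ℝ → ℝ → ℝ} {w₀ : ℝ → ℝ}
    (hab : a ≤ b) (hbc : b ≤ c) (hcd : c ≤ d) (hT : 0 ≤ T)
    (hu : HasEnergyBalance lam wu a c T) (hv : HasEnergyBalance lam wv b d T)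
    (hc : lam < 0 → ∀ t ∈ Icc 0 T, wu c t = wv c t)
    (hb : 0 < lam → ∀ t ∈ Icc 0 T, wv b t = wu b t)
    (ha : 0 < lam → ∀ t ∈ Icc 0 T, wu a t = 0)
    (hd : lam < 0 → ∀ t ∈ Icc 0 T, wv d t = 0)
    (hu₀ : ∀ x ∈ Icc a c, wu x 0 = w₀ x) (hv₀ : ∀ x ∈ Icc b d, wv x 0 = w₀ x)
    (hw₀ : IntervalIntegrable (fun x => w₀ x ^ 2) volume a d) :
    (∫ x in a..c, wu x T ^ 2) ≤ ∫ x in a..d, w₀ x ^ 2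
      ∧ (∫ x in b..d, wv x T ^ 2) ≤ ∫ x in a..d, w₀ x ^ 2 := by
  have hsq : ∀ {g : ℝ → ℝ} {p q : ℝ}, p ≤ q → 0 ≤ ∫ x in p..q, g x ^ 2 :=
    fun hpq => integral_nonneg hpq fun _ _ => sq_nonneg _
  have hboundary : ∀ {f g : ℝ → ℝ}, (∀ t ∈ Icc 0 T, f t = g t) →
      ∫ t in (0:ℝ)..T, f t ^ 2 = ∫ t in (0:ℝ)..T, g t ^ 2 :=
    fun h => integral_congr fun t ht => by rw [h t (uIcc_of_le hT ▸ ht)]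
  have hinitial : ∀ {w : ℝ → ℝ → ℝ} {lo hi p q : ℝ}, (∀ x ∈ Icc lo hi, w x 0 = w₀ x) →
      lo ≤ p → p ≤ q → q ≤ hi → ∫ x in p..q, w x 0 ^ 2 = ∫ x in p..q, w₀ x ^ 2 :=
    fun h hp hpq hq => integral_congr fun x hx => by
      rw [h x (Icc_subset_Icc hp hq (uIcc_of_le hpq ▸ hx))]
  have hsplit : ∀ x ∈ Icc a d,
      (∫ y in a..x, w₀ y ^ 2) + (∫ y in x..d, w₀ y ^ 2) = ∫ y in a..d, w₀ y ^ 2 :=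
    fun x hx => integral_add_adjacent_intervals
      (hw₀.mono_set (uIcc_subset_uIcc_left (Icc_subset_uIcc hx)))
      (hw₀.mono_set (uIcc_subset_uIcc_right (Icc_subset_uIcc hx)))
  have hsplit_b := hsplit b ⟨hab, hbc.trans hcd⟩
  have hsplit_c := hsplit c ⟨hab.trans hbc, hcd⟩
  have hEu := hu le_rfl (hab.trans hbc) le_rfl
  have hEv := hv le_rfl (hbc.trans hcd) le_rfl
  rw [hinitial hu₀ le_rfl (hab.trans hbc) le_rfl] at hEu
  rw [hinitial hv₀ le_rfl (hbc.trans hcd) le_rfl] at hEv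
  have hΩ_ab := hsq (g := w₀) hab
  have hΩ_cd := hsq (g := w₀) hcd
  rcases lt_trichotomy lam 0 with hneg | rfl | hpos
  · -- `v` has no inflow at `d`; its balance on `[c, d]` bounds the flux it passes to `u` at `c`.
    have hEcd := hv hbc hcd le_rfl
    rw [hinitial hv₀ hbc hcd le_rfl] at hEcd
    have hvd : ∫ t in (0:ℝ)..T, wv d t ^ 2 = 0 := by simpa using hboundary (hd hneg)
    rw [hboundary (hc hneg)] at hEu
    rw [hvd] at hEv hEcd
    have hEv_cd := hsq (g := (wv · T)) hcd
    have hflux_a := mul_nonpos_of_nonpos_of_nonneg hneg.le (hsq (g := (wu a ·)) hT)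
    have hflux_b := mul_nonpos_of_nonpos_of_nonneg hneg.le (hsq (g := (wv b ·)) hT)
    constructor <;> linarith
  · constructor <;> linarith
  · -- `u` has no inflow at `a`; its balance on `[a, b]` bounds the flux it passes to `v` at `b`.
    have hEab := hu le_rfl hab hbc
    rw [hinitial hu₀ le_rfl hab hbc] at hEab
    have hua : ∫ t in (0:ℝ)..T, wu a t ^ 2 = 0 := by simpa using hboundary (ha hpos)
    rw [hboundary (hb hpos)] at hEv
    rw [hua] at hEu hEab
    have hEu_ab := hsq (g := (wu · T)) hab
    have hflux_c := mul_nonneg hpos.le (hsq (g := (wu c ·)) hT)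
    have hflux_d := mul_nonneg hpos.le (hsq (g := (wv d ·)) hT)
    constructor <;> linarith

theorem stmt15_general (n : ℕ) (a b c d : ℝ) (hab : a < b) (hbc : b < c) (hcd : c < d)
    (P : Matrix (Fin n) (Fin n) ℝ) (Λ : Fin n → ℝ)
    (hP : Pᵀ * P = 1)
    (A : Matrix (Fin n) (Fin n) ℝ) (hA : A = P * Matrix.diagonal Λ * Pᵀ)
    (ω₀ : ℝ → Fin n → ℝ)
    (u ut ux v vt vx : ℝ → ℝ → Fin n → ℝ)
    (hut : ∀ x ∈ Set.Icc a c, ∀ t ∈ Set.Ici (0:ℝ), HasDerivAt (fun τ => u x τ) (ut x t) t)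
    (hux : ∀ x ∈ Set.Icc a c, ∀ t ∈ Set.Ici (0:ℝ), HasDerivAt (fun ξ => u ξ t) (ux x t) x)
    (hvt : ∀ x ∈ Set.Icc b d, ∀ t ∈ Set.Ici (0:ℝ), HasDerivAt (fun τ => v x τ) (vt x t) t)
    (hvx : ∀ x ∈ Set.Icc b d, ∀ t ∈ Set.Ici (0:ℝ), HasDerivAt (fun ξ => v ξ t) (vx x t) x)
    (hcontu : ContinuousOn (fun p : ℝ × ℝ => u p.1 p.2) (Set.Icc a c ×ˢ Set.Ici 0))
    (hcontut : ContinuousOn (fun p : ℝ × ℝ => ut p.1 p.2) (Set.Icc a c ×ˢ Set.Ici 0))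
    (hcontux : ContinuousOn (fun p : ℝ × ℝ => ux p.1 p.2) (Set.Icc a c ×ˢ Set.Ici 0))
    (hcontv : ContinuousOn (fun p : ℝ × ℝ => v p.1 p.2) (Set.Icc b d ×ˢ Set.Ici 0))
    (hcontvt : ContinuousOn (fun p : ℝ × ℝ => vt p.1 p.2) (Set.Icc b d ×ˢ Set.Ici 0))
    (hcontvx : ContinuousOn (fun p : ℝ × ℝ => vx p.1 p.2) (Set.Icc b d ×ˢ Set.Ici 0))
    (hpdeu : ∀ x ∈ Set.Icc a c, ∀ t ∈ Set.Ici (0:ℝ), ut x t + A *ᵥ ux x t = 0)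
    (hpdev : ∀ x ∈ Set.Icc b d, ∀ t ∈ Set.Ici (0:ℝ), vt x t + A *ᵥ vx x t = 0)
    (hcouple_c : ∀ t ∈ Set.Ici (0:ℝ), ∀ i, Λ i < 0 → (Pᵀ *ᵥ u c t) i = (Pᵀ *ᵥ v c t) i)
    (hcouple_b : ∀ t ∈ Set.Ici (0:ℝ), ∀ i, 0 < Λ i → (Pᵀ *ᵥ v b t) i = (Pᵀ *ᵥ u b t) i)
    (hbcu : ∀ t ∈ Set.Ici (0:ℝ), ∀ i, 0 < Λ i → (Pᵀ *ᵥ u a t) i = 0)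
    (hbcv : ∀ t ∈ Set.Ici (0:ℝ), ∀ i, Λ i < 0 → (Pᵀ *ᵥ v d t) i = 0)
    (hicu : ∀ x ∈ Set.Icc a c, u x 0 = ω₀ x)
    (hicv : ∀ x ∈ Set.Icc b d, v x 0 = ω₀ x)
    (T : ℝ) (hT : 0 ≤ T) :
    (∫ x in a..c, u x T ⬝ᵥ u x T) ≤ (∫ x in a..d, ω₀ x ⬝ᵥ ω₀ x)
    ∧ (∫ x in b..d, v x T ⬝ᵥ v x T) ≤ (∫ x in a..d, ω₀ x ⬝ᵥ ω₀ x) := by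
  have hac : a ≤ c := (hab.trans hbc).le
  have had : a ≤ d := hac.trans hcd.le
  have hPA : Pᵀ * A = diagonal Λ * Pᵀ := by rw [hA, ← mul_assoc, ← mul_assoc, hP, one_mul]
  have hu := (IsClassicalSolution.mk hut hux hcontu hcontut hcontux hpdeu).mulVec hPA
  have hv := (IsClassicalSolution.mk hvt hvx hcontv hcontvt hcontvx hpdev).mulVec hPA
  have hω : ContinuousOn ω₀ (Icc a d) := by
    rw [← Icc_union_Icc_eq_Icc hac hcd.le]
    refine ContinuousOn.union_of_isClosed ?_ ?_ isClosed_Icc isClosed_Icc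
    · exact (hcontu.uncurry_right (f := u) 0 self_mem_Ici).congr fun x hx => (hicu x hx).symm
    · exact ((hcontv.uncurry_right (f := v) 0 self_mem_Ici).congr
        fun x hx => (hicv x hx).symm).mono (Icc_subset_Icc hbc.le le_rfl)
  have key : ∀ i, ∫ x in a..c, (Pᵀ *ᵥ u x T) i ^ 2 ≤ ∫ x in a..d, (Pᵀ *ᵥ ω₀ x) i ^ 2
      ∧ ∫ x in b..d, (Pᵀ *ᵥ v x T) i ^ 2 ≤ ∫ x in a..d, (Pᵀ *ᵥ ω₀ x) i ^ 2 := fun i =>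
    overset_energy_le hab.le hbc.le hcd.le hT
      (hu.hasEnergyBalance hT i) (hv.hasEnergyBalance hT i)
      (fun h t ht => hcouple_c t ht.1 i h) (fun h t ht => hcouple_b t ht.1 i h)
      (fun h t ht => hbcu t ht.1 i h) (fun h t ht => hbcv t ht.1 i h)
      (fun x hx => by rw [hicu x hx]) (fun x hx => by rw [hicv x hx])
      ((by fun_prop : ContinuousOn _ _).intervalIntegrable_of_Icc had)
  rw [integral_dotProduct_self_eq_sum_sq_transpose_mulVec hP hac
      (hcontu.uncurry_right (f := u) T hT),
    integral_dotProduct_self_eq_sum_sq_transpose_mulVec hP (hbc.trans hcd).le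
      (hcontv.uncurry_right (f := v) T hT),
    integral_dotProduct_self_eq_sum_sq_transpose_mulVec hP had hω]
  exact ⟨Finset.sum_le_sum fun i _ => (key i).1, Finset.sum_le_sum fun i _ => (key i).2⟩

theorem stmt15 (n : ℕ) (a b c d : ℝ) (hab : a < b) (hbc : b < c) (hcd : c < d)
    (P : Matrix (Fin n) (Fin n) ℝ) (Λ : Fin n → ℝ)
    (hP : Pᵀ * P = 1) (hΛ : ∀ i, Λ i ≠ 0)
    (A : Matrix (Fin n) (Fin n) ℝ) (hA : A = P * Matrix.diagonal Λ * Pᵀ)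
    (ω₀ : ℝ → Fin n → ℝ)
    (u ut ux v vt vx : ℝ → ℝ → Fin n → ℝ)
    (hut : ∀ x ∈ Set.Icc a c, ∀ t ∈ Set.Ici (0:ℝ), HasDerivAt (fun τ => u x τ) (ut x t) t)
    (hux : ∀ x ∈ Set.Icc a c, ∀ t ∈ Set.Ici (0:ℝ), HasDerivAt (fun ξ => u ξ t) (ux x t) x)
    (hvt : ∀ x ∈ Set.Icc b d, ∀ t ∈ Set.Ici (0:ℝ), HasDerivAt (fun τ => v x τ) (vt x t) t)
    (hvx : ∀ x ∈ Set.Icc b d, ∀ t ∈ Set.Ici (0:ℝ), HasDerivAt (fun ξ => v ξ t) (vx x t) x)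
    (hcontu : ContinuousOn (fun p : ℝ × ℝ => u p.1 p.2) (Set.Icc a c ×ˢ Set.Ici 0))
    (hcontut : ContinuousOn (fun p : ℝ × ℝ => ut p.1 p.2) (Set.Icc a c ×ˢ Set.Ici 0))
    (hcontux : ContinuousOn (fun p : ℝ × ℝ => ux p.1 p.2) (Set.Icc a c ×ˢ Set.Ici 0))
    (hcontv : ContinuousOn (fun p : ℝ × ℝ => v p.1 p.2) (Set.Icc b d ×ˢ Set.Ici 0))
    (hcontvt : ContinuousOn (fun p : ℝ × ℝ => vt p.1 p.2) (Set.Icc b d ×ˢ Set.Ici 0))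
    (hcontvx : ContinuousOn (fun p : ℝ × ℝ => vx p.1 p.2) (Set.Icc b d ×ˢ Set.Ici 0))
    (hpdeu : ∀ x ∈ Set.Icc a c, ∀ t ∈ Set.Ici (0:ℝ), ut x t + A *ᵥ ux x t = 0)
    (hpdev : ∀ x ∈ Set.Icc b d, ∀ t ∈ Set.Ici (0:ℝ), vt x t + A *ᵥ vx x t = 0)
    (hcouple_c : ∀ t ∈ Set.Ici (0:ℝ), ∀ i, Λ i < 0 → (Pᵀ *ᵥ u c t) i = (Pᵀ *ᵥ v c t) i)
    (hcouple_b : ∀ t ∈ Set.Ici (0:ℝ), ∀ i, 0 < Λ i → (Pᵀ *ᵥ v b t) i = (Pᵀ *ᵥ u b t) i)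
    (hbcu : ∀ t ∈ Set.Ici (0:ℝ), ∀ i, 0 < Λ i → (Pᵀ *ᵥ u a t) i = 0)
    (hbcv : ∀ t ∈ Set.Ici (0:ℝ), ∀ i, Λ i < 0 → (Pᵀ *ᵥ v d t) i = 0)
    (hicu : ∀ x ∈ Set.Icc a c, u x 0 = ω₀ x)
    (hicv : ∀ x ∈ Set.Icc b d, v x 0 = ω₀ x)
    (T : ℝ) (hT : 0 ≤ T) :
    (∫ x in a..c, u x T ⬝ᵥ u x T) ≤ (∫ x in a..d, ω₀ x ⬝ᵥ ω₀ x)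
    ∧ (∫ x in b..d, v x T ⬝ᵥ v x T) ≤ (∫ x in a..d, ω₀ x ⬝ᵥ ω₀ x) :=
  stmt15_general n a b c d hab hbc hcd P Λ hP A hA ω₀ u ut ux v vt vx hut hux hvt hvx hcontu hcontut
    hcontux hcontv hcontvt hcontvx hpdeu hpdev hcouple_c hcouple_b hbcu hbcv hicu hicv T hT
end
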